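/- arXiv:1012.2068 — 5 statements merged into one kernel-verified Lean document; each statement's English description precedes it below -/
import Mathlib

section
/- Let q ≥ 3 and n ≥ 3 be integers. Then there is no positive integer d such that both d·(q² − q + 1) ≥ qⁿ + 1 and d·((q² − 1)(qⁿ + 1) − (q³ + 1)) ≤ (qⁿ − 2)(qⁿ + 1). -/
/-!
Write `Q = qⁿ`, `A = (q² − 1)(Q + 1) − (q³ + 1)` and `c = q² − q + 1`. Since `A ≥ 0`, the two
bounds on `d` combine into `(Q + 1)·A ≤ c·d·A ≤ c·(Q − 2)(Q + 1)`, i.e. `A ≤ c·(Q − 2)`.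
But `A − c·(Q − 2) = (q − 2)(Q − q² + q)`, which is positive for `q ≥ 3` and `Q ≥ q²`.
-/

theorem mul_le_mul_of_le_mul_of_mul_le {R : Type*} [CommSemiring R] [PartialOrder R]
    [IsOrderedRing R] {x d c a b : R} (hx : x ≤ d * c) (hb : d * a ≤ b) (ha : 0 ≤ a)
    (hc : 0 ≤ c) : x * a ≤ c * b :=
  calc x * a ≤ d * c * a := mul_le_mul_of_nonneg_right hx ha
    _ = c * (d * a) := by ring
    _ ≤ c * b := mul_le_mul_of_nonneg_left hb hc

theorem ggk_sub_eq {R : Type*} [CommRing R] (q Q : R) :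
    (q ^ 2 - 1) * (Q + 1) - (q ^ 3 + 1) - (q ^ 2 - q + 1) * (Q - 2) = (q - 2) * (Q - q ^ 2 + q) := by
  ring

section GGK

variable {R : Type*} [CommRing R] [LinearOrder R] [IsStrictOrderedRing R] {q Q : R}

theorem lt_ggk (hq : 3 ≤ q) (hQ : q ^ 2 ≤ Q) :
    (q ^ 2 - q + 1) * (Q - 2) < (q ^ 2 - 1) * (Q + 1) - (q ^ 3 + 1) := by
  have hpos : 0 < (q - 2) * (Q - q ^ 2 + q) := mul_pos (by linarith) (by linarith)
  linarith [ggk_sub_eq q Q]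

theorem ggk_nonneg (hq : 3 ≤ q) (hQ : q ^ 2 ≤ Q) :
    0 ≤ (q ^ 2 - 1) * (Q + 1) - (q ^ 3 + 1) := by
  have hc : 0 < q ^ 2 - q + 1 := by nlinarith
  have hQ2 : 0 ≤ Q - 2 := by nlinarith
  linarith [lt_ggk hq hQ, mul_nonneg hc.le hQ2]

end GGK

/-- Arithmetic core of Theorem 1.1: for `q ≥ 3`, `n ≥ 3`, there is no positive
integer `d` with `d·(q² − q + 1) ≥ qⁿ + 1` and
`d·((q² − 1)(qⁿ + 1) − (q³ + 1)) ≤ (qⁿ − 2)(qⁿ + 1)`. -/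
theorem no_galois_degree_GGK (q : ℤ) (n : ℕ) (hq : 3 ≤ q) (hn : 3 ≤ n) :
    ¬ ∃ d : ℤ, 0 < d ∧ q ^ n + 1 ≤ d * (q ^ 2 - q + 1) ∧
      d * ((q ^ 2 - 1) * (q ^ n + 1) - (q ^ 3 + 1)) ≤ (q ^ n - 2) * (q ^ n + 1) := by
  rintro ⟨d, -, hlow, hhigh⟩
  have hQ : q ^ 2 ≤ q ^ n := pow_le_pow_right₀ (by linarith) (by omega)
  have hc : 0 ≤ q ^ 2 - q + 1 := by nlinarith
  have hQ1 : 0 < q ^ n + 1 := by nlinarith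
  have hcombined := mul_le_mul_of_le_mul_of_mul_le hlow hhigh (ggk_nonneg hq hQ) hc
  have hA : (q ^ 2 - 1) * (q ^ n + 1) - (q ^ 3 + 1) ≤ (q ^ 2 - q + 1) * (q ^ n - 2) :=
    le_of_mul_le_mul_left (by linarith [hcombined]) hQ1
  exact (lt_ggk hq hQ).not_ge hA
end

section
/- Let m, A, B, k, d be integers with m ≥ 2, A ≥ 0, 1 ≤ B ≤ m + 1, A(m + 1) − B ≥ −2, k ≥ 0, k(A + 1) < B, B ≠ A + 2, and d ≥ 1. Set N_Y = (m + 1)² + (A(m + 1) − B)·m. If m³ + 1 ≤ d·N_Y, then d(A + 1) ≥ m + k. In particular, if B > A + 2 then d(A + 1) ≥ m + 1. -/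
/-!
Write `N = (m + 1)² + (A(m + 1) − B)m` for the point count of `Y`. Since `d N ≥ m³ + 1` and
`N > 0`, it suffices to show `(m + k − 1) N < (A + 1)(m³ + 1)`. With `s = B − k(A + 1) − 1 ≥ 0`
the difference of the two sides is `s m (m + k − 1) + (k − 1)²(A + 1)m − m + A + 2 − k`, which is
positive: for `k = 1` because `B ≠ A + 2` forces `s ≥ 1`, and for `k ≥ 2` because the genus bound
`B ≤ A(m + 1) + 2` excludes `A = 0`.
-/

namespace LemmaCov

def numPoints (m A B : ℤ) : ℤ := (m + 1) ^ 2 + (A * (m + 1) - B) * m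

variable {m A B k : ℤ}

lemma numPoints_pos (hm : 0 ≤ m) (hgenus : -2 ≤ A * (m + 1) - B) : 0 < numPoints m A B := by
  unfold numPoints
  nlinarith

lemma mul_cube_add_one_sub_mul_numPoints :
    (A + 1) * (m ^ 3 + 1) - (m + k - 1) * numPoints m A B =
      (B - k * (A + 1) - 1) * m * (m + k - 1) + (k - 1) ^ 2 * (A + 1) * m - m + A + 2 - k := by
  unfold numPoints
  ring

lemma mul_numPoints_lt (hm : 1 ≤ m) (hA : 0 ≤ A) (hgenus : -2 ≤ A * (m + 1) - B)
    (hk : 0 ≤ k) (hkB : k * (A + 1) < B) (hBA : B ≠ A + 2) :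
    (m + k - 1) * numPoints m A B < (A + 1) * (m ^ 3 + 1) := by
  have hs : 0 ≤ B - k * (A + 1) - 1 := by linarith
  have hterm : 0 ≤ (B - k * (A + 1) - 1) * m * (m + k - 1) :=
    mul_nonneg (mul_nonneg hs (by linarith)) (by linarith)
  suffices
      0 < (B - k * (A + 1) - 1) * m * (m + k - 1) + (k - 1) ^ 2 * (A + 1) * m - m + A + 2 - k by
    linarith [mul_cube_add_one_sub_mul_numPoints (m := m) (A := A) (B := B) (k := k)]
  obtain rfl | rfl | hk2 : k = 0 ∨ k = 1 ∨ 2 ≤ k := by omega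
  · nlinarith
  · have hB : A + 3 ≤ B := by omega
    nlinarith [mul_nonneg (by linarith : (0 : ℤ) ≤ B - A - 3) (mul_self_nonneg m),
      mul_nonneg (by linarith : (0 : ℤ) ≤ m) (by linarith : (0 : ℤ) ≤ m - 1)]
  · have hA1 : 1 ≤ A := by
      by_contra! hA0
      obtain rfl : A = 0 := by omega
      linarith
    nlinarith [mul_le_mul_of_nonneg_right (by nlinarith : k - 1 ≤ (k - 1) ^ 2 * (A + 1))
      (by linarith : (0 : ℤ) ≤ m)]

lemma add_le_mul_of_le_mul_numPoints {d : ℤ} (hm : 1 ≤ m) (hA : 0 ≤ A)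
    (hgenus : -2 ≤ A * (m + 1) - B) (hk : 0 ≤ k) (hkB : k * (A + 1) < B) (hBA : B ≠ A + 2)
    (hcount : m ^ 3 + 1 ≤ d * numPoints m A B) :
    m + k ≤ d * (A + 1) := by
  have hN := numPoints_pos (by linarith) hgenus
  have hlt := mul_numPoints_lt hm hA hgenus hk hkB hBA
  have hcount' : (A + 1) * (m ^ 3 + 1) ≤ d * (A + 1) * numPoints m A B := by
    linarith [mul_le_mul_of_nonneg_left hcount (by linarith : (0 : ℤ) ≤ A + 1)]
  have := lt_of_mul_lt_mul_right (hlt.trans_le hcount') hN.le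
  linarith

end LemmaCov

open LemmaCov in
theorem lemma_cov_general (m A B k d : ℤ) (hm : 2 ≤ m) (hA : 0 ≤ A)
    (hgenus : -2 ≤ A * (m + 1) - B)
    (hk : 0 ≤ k) (hkB : k * (A + 1) < B) (hBA : B ≠ A + 2)
    (hcount : m ^ 3 + 1 ≤ d * ((m + 1) ^ 2 + (A * (m + 1) - B) * m)) :
    m + k ≤ d * (A + 1) ∧ (A + 2 < B → m + 1 ≤ d * (A + 1)) := by
  have hm₁ : 1 ≤ m := by linarith
  exact ⟨add_le_mul_of_le_mul_numPoints hm₁ hA hgenus hk hkB hBA hcount, fun hB =>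
    add_le_mul_of_le_mul_numPoints hm₁ hA hgenus zero_le_one (by linarith) hBA hcount⟩

/-- Arithmetic form of Lemma 2.1: with `N_Y = (m + 1)² + (A(m + 1) − B)·m`,
if `m³ + 1 ≤ d·N_Y` then `d(A + 1) ≥ m + k`; in particular `d(A + 1) ≥ m + 1`
when `B > A + 2`. -/
theorem lemma_cov (m A B k d : ℤ) (hm : 2 ≤ m) (hA : 0 ≤ A)
    (hB1 : 1 ≤ B) (hB2 : B ≤ m + 1) (hgenus : -2 ≤ A * (m + 1) - B)
    (hk : 0 ≤ k) (hkB : k * (A + 1) < B) (hBA : B ≠ A + 2) (hd : 1 ≤ d)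
    (hcount : m ^ 3 + 1 ≤ d * ((m + 1) ^ 2 + (A * (m + 1) - B) * m)) :
    m + k ≤ d * (A + 1) ∧ (A + 2 < B → m + 1 ≤ d * (A + 1)) :=
  lemma_cov_general m A B k d hm hA hgenus hk hkB hBA hcount
end

section
/- Let m, A, B, k, d, u, v be integers with m ≥ 2, A ≥ 1, k ≥ 1, k(A + 1) < B ≤ m + 1, B > A + 2, u ≥ 0, v ≥ 0, and d = 1 + u + v. Set N_Y = (m + 1)² + (A(m + 1) − B)·m and suppose m³ + 1 ≤ d·N_Y. Set R = (m − 2)(m + 1) − d·(A(m + 1) − B) and suppose v(m + 1) ≤ R ≤ v(m + 1) + 3u + v. Then dB ≥ (k + 1)(m + 1). -/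
/-!
Suppose `dB < (k + 1)(m + 1)`. Dividing the lower bound `v(m + 1) ≤ R` by `m + 1` gives
`dA + v ≤ m + k - 2`. Inserting this and a bound `B ≥ kA + e` into the upper bound
`R ≤ v(m + 1) + 3u + v` leaves `(e - 3)d + 3 + 2v ≤ (3 - k)k + vk`. For `k = 1` take `e = 3`
(from `B > A + 2`), for `k ≥ 2` take `e = k + 1` (from `B > k(A + 1)`); since `d = 1 + u + v`,
both choices give a contradiction.
-/

section

variable {m A B k d u v : ℤ}

lemma mul_add_le_of_ramification_lower_bound (hm : 0 < m + 1)
    (hR1 : v * (m + 1) ≤ (m - 2) * (m + 1) - d * (A * (m + 1) - B))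
    (hdB : d * B < (k + 1) * (m + 1)) :
    d * A + v ≤ m + k - 2 := by
  have : (d * A + v) * (m + 1) < (m + k - 1) * (m + 1) := by linarith
  linarith [lt_of_mul_lt_mul_right this hm.le]

lemma le_of_ramification_upper_bound (e : ℤ) (hkm : k ≤ m + 1) (hd0 : 0 ≤ d)
    (hd : d = 1 + u + v) (heB : k * A + e ≤ B) (hdA : d * A + v ≤ m + k - 2)
    (hR2 : (m - 2) * (m + 1) - d * (A * (m + 1) - B) ≤ v * (m + 1) + 3 * u + v) :
    (e - 3) * d + 3 + 2 * v ≤ (3 - k) * k + v * k := by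
  have hdB : d * (k * A + e) ≤ d * B := mul_le_mul_of_nonneg_left heB hd0
  have hdA' : d * A * (m + 1 - k) ≤ (m + k - 2 - v) * (m + 1 - k) :=
    mul_le_mul_of_nonneg_right (by linarith) (by linarith)
  linear_combination hR2 + hdB + hdA' - 3 * hd

end

theorem prop_lower_bound_general (m A B k d u v : ℤ) (hA : 1 ≤ A) (hk : 1 ≤ k)
    (hkB : k * (A + 1) < B) (hB : B ≤ m + 1) (hBA : A + 2 < B)
    (hu : 0 ≤ u) (hv : 0 ≤ v) (hd : d = 1 + u + v)
    (hR1 : v * (m + 1) ≤ (m - 2) * (m + 1) - d * (A * (m + 1) - B))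
    (hR2 : (m - 2) * (m + 1) - d * (A * (m + 1) - B) ≤ v * (m + 1) + 3 * u + v) :
    (k + 1) * (m + 1) ≤ d * B := by
  by_contra! hdB
  have h2k : 2 * k ≤ m := by nlinarith
  have hdA := mul_add_le_of_ramification_lower_bound (by linarith) hR1 hdB
  rcases hk.eq_or_lt with rfl | hk2
  · have := le_of_ramification_upper_bound 3 (by linarith) (by linarith) hd (by linarith) hdA hR2
    linarith
  · have := le_of_ramification_upper_bound (k + 1) (by linarith) (by linarith) hd
      (by linarith) hdA hR2
    nlinarith [mul_nonneg (by linarith : (0 : ℤ) ≤ k - 2) hu]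

/-- Arithmetic form of Proposition 5.1: the new lower bound `dB ≥ (k + 1)(m + 1)`
for the degree `d` of a Galois covering of a maximal curve by the Hermitian curve,
where `R = (m − 2)(m + 1) − d(A(m + 1) − B)` is the degree of the ramification
divisor and `d = 1 + u + v` with `v(m + 1) ≤ R ≤ v(m + 1) + 3u + v`. -/
theorem prop_lower_bound (m A B k d u v : ℤ) (hm : 2 ≤ m) (hA : 1 ≤ A) (hk : 1 ≤ k)
    (hkB : k * (A + 1) < B) (hB : B ≤ m + 1) (hBA : A + 2 < B)
    (hu : 0 ≤ u) (hv : 0 ≤ v) (hd : d = 1 + u + v)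
    (hcount : m ^ 3 + 1 ≤ d * ((m + 1) ^ 2 + (A * (m + 1) - B) * m))
    (hR1 : v * (m + 1) ≤ (m - 2) * (m + 1) - d * (A * (m + 1) - B))
    (hR2 : (m - 2) * (m + 1) - d * (A * (m + 1) - B) ≤ v * (m + 1) + 3 * u + v) :
    (k + 1) * (m + 1) ≤ d * B :=
  prop_lower_bound_general m A B k d u v hA hk hkB hB hBA hu hv hd hR1 hR2
end

section
/- Let q be a prime power and let F be a finite field with q² elements. Then the number of pairs (x, y) ∈ F × F satisfying x^q + x = y^{q+1} is exactly q³. -/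
/-!
Write `q = p ^ n` and `T x = x ^ q + x`. Since `|F| = q²`, the map `x ↦ x ^ q` is an additive
involution of `F`, so `T` is additive and takes values in the fixed field `{c | c ^ q = c}`.
Both `ker T` (roots of `X ^ q + X`) and that fixed field (roots of `X ^ q - X`) have at most `q`
elements, while `|ker T| · |im T| = q²`; hence `|ker T| = q` and `T` maps onto the fixed field.
As `y ^ (q + 1)` is fixed by `x ↦ x ^ q`, each of the `q²` values of `y` contributes exactly
`q` solutions `x`.
-/

open Polynomial

lemma card_subtype_prod_eq_sum_snd {α β : Type*} [Finite α] [Fintype β] (P : α → β → Prop) :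
    Nat.card {z : α × β // P z.1 z.2} = ∑ b, Nat.card {a // P a b} := by
  rw [← Nat.card_sigma]
  exact Nat.card_congr <| ((Equiv.prodComm α β).subtypeEquiv fun _ => Iff.rfl).trans
    (Equiv.subtypeProdEquivSigmaSubtype fun b a => P a b)

lemma ncard_setOf_pow_eq_mul_le {R : Type*} [CommRing R] [IsDomain R] {q : ℕ} (hq : 1 < q)
    (a : R) : {x : R | x ^ q = a * x}.ncard ≤ q := by
  set P : R[X] := X ^ q - C a * X
  have hdeg : P.natDegree = q := by
    rw [natDegree_sub_eq_left_of_natDegree_lt] <;> simp only [natDegree_X_pow]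
    exact (natDegree_C_mul_le a X).trans_lt (by simpa using hq)
  have hP : P ≠ 0 := ne_zero_of_natDegree_gt (hdeg ▸ hq)
  calc {x : R | x ^ q = a * x}.ncard ≤ (P.rootSet R).ncard :=
        Set.ncard_le_ncard (fun x hx => by simp_all [P, mem_rootSet_of_ne hP, sub_eq_zero])
          (P.rootSet_finite R)
    _ ≤ q := hdeg ▸ P.ncard_rootSet_le R

namespace AddMonoidHom

variable {G H : Type*} [AddGroup G] [AddGroup H]

lemma card_ker_mul_card_range (f : G →+ H) : Nat.card f.ker * Nat.card f.range = Nat.card G :=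
  AddSubgroup.index_ker f ▸ f.ker.card_mul_index

lemma card_fiber_eq_card_ker (f : G →+ H) (x₀ : G) :
    Nat.card {x // f x = f x₀} = Nat.card f.ker :=
  Nat.card_congr <| (Equiv.subRight x₀).subtypeEquiv fun x => by simp [sub_eq_zero]

lemma card_ker_eq_and_range_eq [Finite G] [Finite H] (f : G →+ H) {S : Set H} {k m : ℕ}
    (hker : Nat.card f.ker ≤ k) (hrange : Set.range f ⊆ S) (hS : S.ncard ≤ m)
    (hG : Nat.card G = k * m) : Nat.card f.ker = k ∧ Set.range f = S := by
  have hr : Nat.card f.range = (Set.range f).ncard := by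
    rw [← coe_range, ← SetLike.coe_sort_coe, Nat.card_coe_set_eq]
  have hrS : (Set.range f).ncard ≤ S.ncard := Set.ncard_le_ncard hrange
  have hprod := f.card_ker_mul_card_range
  have hk : 0 < Nat.card f.ker := Nat.card_pos
  have hm : 0 < Nat.card f.range := Nat.card_pos
  have hk_eq : Nat.card f.ker = k := by nlinarith
  refine ⟨hk_eq, Set.eq_of_subset_of_ncard_le hrange ?_⟩
  subst hk_eq
  nlinarith

end AddMonoidHom

section FrobeniusAddSelf

variable (F : Type*) [Field F] (p n : ℕ) [ExpChar F p]

/-- The trace of `F` over its subfield `{c | c ^ p ^ n = c}` when `|F| = (p ^ n) ^ 2`. -/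
def frobeniusAddSelf : F →+ F := (iterateFrobenius F p n : F →+ F) + AddMonoidHom.id F

variable {F p n}

@[simp]
lemma frobeniusAddSelf_apply (x : F) : frobeniusAddSelf F p n x = x ^ p ^ n + x := rfl

variable [Fintype F]

lemma pow_pow_eq_self_of_card_eq_sq {q : ℕ} (hF : Fintype.card F = q ^ 2) (x : F) :
    (x ^ q) ^ q = x := by
  rw [← pow_mul, ← sq, ← hF, FiniteField.pow_card]

lemma card_fiber_frobeniusAddSelf (hF : Fintype.card F = (p ^ n) ^ 2) {c : F}
    (hc : c ^ p ^ n = c) : Nat.card {x : F // x ^ p ^ n + x = c} = p ^ n := by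
  set q := p ^ n
  have hq : 1 < q := by
    by_contra! h
    have := Fintype.one_lt_card (α := F)
    nlinarith
  have hker : Nat.card (frobeniusAddSelf F p n).ker ≤ q := by
    rw [← SetLike.coe_sort_coe, Nat.card_coe_set_eq]
    refine (Set.ncard_le_ncard fun x hx => ?_).trans (ncard_setOf_pow_eq_mul_le hq (-1))
    simpa [add_eq_zero_iff_eq_neg] using hx
  have hrange : Set.range (frobeniusAddSelf F p n) ⊆ {c | c ^ q = 1 * c} := by
    rintro _ ⟨x, rfl⟩
    simp [q, add_pow_expChar_pow, pow_pow_eq_self_of_card_eq_sq hF, add_comm]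
  obtain ⟨hker_eq, hrange_eq⟩ := (frobeniusAddSelf F p n).card_ker_eq_and_range_eq hker hrange
    (ncard_setOf_pow_eq_mul_le hq 1) (by rw [Nat.card_eq_fintype_card, hF, sq])
  obtain ⟨x₀, hx₀⟩ : c ∈ Set.range (frobeniusAddSelf F p n) := by simpa [hrange_eq] using hc
  simpa [hx₀] using (frobeniusAddSelf F p n).card_fiber_eq_card_ker x₀ |>.trans hker_eq

end FrobeniusAddSelf

/-- The Hermitian curve `x^q + x = y^{q+1}` has exactly `q³` affine points over `F_{q²}`. -/
theorem hermitian_affine_point_count (q : ℕ) (hq : IsPrimePow q)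
    (F : Type*) [Field F] [Fintype F] (hF : Fintype.card F = q ^ 2) :
    Nat.card {p : F × F // p.1 ^ q + p.1 = p.2 ^ (q + 1)} = q ^ 3 := by
  obtain ⟨p, n, hp, -, rfl⟩ := hq
  have : Fact p.Prime := ⟨hp.nat_prime⟩
  have : CharP F p := charP_of_card_eq_prime_pow (hF.trans (pow_mul p n 2).symm)
  have hnorm (y : F) : (y ^ (p ^ n + 1)) ^ p ^ n = y ^ (p ^ n + 1) := by
    rw [pow_succ, mul_pow, pow_pow_eq_self_of_card_eq_sq hF, mul_comm]
  rw [card_subtype_prod_eq_sum_snd fun x y => x ^ p ^ n + x = y ^ (p ^ n + 1)]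
  simp only [card_fiber_frobeniusAddSelf hF (hnorm _), Finset.sum_const, Finset.card_univ, hF,
    smul_eq_mul]
  ring
end

section
/- Let m, A, k be integers with m ≥ 2, A ≥ 0, and either k = 0, or both k ≥ 2 and A ≥ 1. Then (m³ + 1)(A + 1) > ((m + 1)² + (A(m + 1) − k(A + 1) − 1)·m)·(m − 1 + k). -/
/-!
Writing `N = (m + 1)² + (A(m + 1) − (k(A + 1) + 1))m = (A + 1)m(m + 1 − k) + 1`, the product
`N(m − 1 + k)` is `(A + 1)(m³ − (k − 1)²m) + (m − 1 + k)`, so the gap between the two sides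
of the inequality is the polynomial `A + A(k − 1)²m + (k − 2)(km − 1)`. For `k = 0` this is
`A(m + 1) + 2`; for `k ≥ 2` its last two terms are nonnegative and `A > 0`.
-/

theorem cov_key_gap_eq {R : Type*} [CommRing R] (m A k : R) :
    (m ^ 3 + 1) * (A + 1) - ((m + 1) ^ 2 + (A * (m + 1) - (k * (A + 1) + 1)) * m) * (m - 1 + k)
      = A + A * (k - 1) ^ 2 * m + (k - 2) * (k * m - 1) := by
  ring

/-- Key inequality in the proof of Lemma 2.1 for the case `B = k(A + 1) + 1`:
`(m³ + 1)(A + 1) > N_Y·(m − 1 + k)` where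
`N_Y = (m + 1)² + (A(m + 1) − (k(A + 1) + 1))·m`, valid for `k = 0` and for
`k ≥ 2` (with `A ≥ 1`). -/
theorem lemma_cov_key_ineq (m A k : ℤ) (hm : 2 ≤ m) (hA : 0 ≤ A)
    (hk : k = 0 ∨ (2 ≤ k ∧ 1 ≤ A)) :
    ((m + 1) ^ 2 + (A * (m + 1) - (k * (A + 1) + 1)) * m) * (m - 1 + k)
      < (m ^ 3 + 1) * (A + 1) := by
  rw [← sub_pos, cov_key_gap_eq]
  have hm0 : 0 ≤ m := by linarith
  rcases hk with rfl | ⟨hk, hA_pos⟩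
  · have : 0 ≤ A * m := mul_nonneg hA hm0
    linarith
  · have hkm : 1 ≤ k * m := by nlinarith
    have : 0 ≤ (k - 2) * (k * m - 1) := mul_nonneg (by linarith) (by linarith)
    have : 0 ≤ A * (k - 1) ^ 2 * m := by positivity
    linarith
end
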